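/- Suppose (x,U) ∼_0 (y,V), i.e., closure(U·x) = closure(V·y). Then for every ordinal α > 0, (x,U) ∼_α (y,V) if and only if player II has a winning strategy in the game G^s(x,U,y,V,α). -/

import Mathlib

noncomputable section

variable {G X : Type*} [TopologicalSpace G] [Group G] [IsTopologicalGroup G]
  [TopologicalSpace X] [MulAction G X] [ContinuousSMul G X]

/-- The closure of the partial orbit `U · x`. -/
def orbCl (U : Set G) (x : X) : Set X :=
  closure ((fun g : G => g • x) '' U)

/-- Hjorth's ordinal-indexed asymmetric relations `(x,U) ≤_α (y,V)`:
`≤₀` is inclusion of orbit closures; `(x,U) ≤_{α+1} (y,V)` iff for every nonempty open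
`U' ⊆ U` there is a nonempty open `V' ⊆ V` with `(y,V') ≤_α (x,U')`; limits are
conjunctions. -/
def hle (α : Ordinal) : X → Set G → X → Set G → Prop :=
  Ordinal.limitRecOn (motive := fun _ => X → Set G → X → Set G → Prop) α
    (fun x U y V => orbCl U x ⊆ orbCl V y)
    (fun _ ih x U y V =>
      ∀ U' : Set G, IsOpen U' → U'.Nonempty → U' ⊆ U →
        ∃ V' : Set G, IsOpen V' ∧ V'.Nonempty ∧ V' ⊆ V ∧ ih y V' x U')
    (fun _ _ ih x U y V => ∀ β hβ, ih β hβ x U y V)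
/-- The symmetric relations `(x,U) ∼_α (y,V)`: `∼₀` is equality of orbit closures;
`∼_{α+1}` requires `∼_α` together with the two back-and-forth conditions; limits are
conjunctions. -/
def hsim (α : Ordinal) : X → Set G → X → Set G → Prop :=
  Ordinal.limitRecOn (motive := fun _ => X → Set G → X → Set G → Prop) α
    (fun x U y V => orbCl U x = orbCl V y)
    (fun _ ih x U y V =>
      ih x U y V ∧
      (∀ U' : Set G, IsOpen U' → U'.Nonempty → U' ⊆ U →
        ∃ V' : Set G, IsOpen V' ∧ V'.Nonempty ∧ V' ⊆ V ∧ ih y V' x U') ∧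
      (∀ V' : Set G, IsOpen V' → V'.Nonempty → V' ⊆ V →
        ∃ U' : Set G, IsOpen U' ∧ U'.Nonempty ∧ U' ⊆ U ∧ ih x U' y V'))
    (fun _ _ ih x U y V => ∀ β hβ, ih β hβ x U y V)

/-- The state of the game `𝒢ˢ(x,U,y,V,α)` before a round: `z` records the side
(`true` for `x`, `false` for `y`) of the previous round (`z₋₁ = x`), `A` and `B`
the previous open sets `A_{i-1}`, `B_{i-1}`, and `o` the previous ordinal `α_{i-1}`. -/
structure SState (G : Type*) where
  z : Bool
  A : Set G
  B : Set G
  o : Ordinal.{u_2}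

/-- A move of player I in `𝒢ˢ`: a triple `(zᵢ, Aᵢ, αᵢ)`. -/
abbrev SMove (G : Type*) := Bool × Set G × Ordinal

/-- Interpretation of the side marker: `true ↦ x`, `false ↦ y`. -/
def pt (x y : X) (b : Bool) : X := if b then x else y

/-- Legality of player I's move `(zᵢ, Aᵢ, αᵢ)` at state `s`. -/
def slegalI (s : SState G) (m : SMove G) : Prop :=
  m.2.2 < s.o ∧ IsOpen m.2.1 ∧ m.2.1.Nonempty ∧
    (if m.1 = s.z then m.2.1 ⊆ s.A else m.2.1 ⊆ s.B)

/-- Legality of player II's response `B'` to the move `m` at state `s`. -/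
def slegalII (x y : X) (s : SState G) (m : SMove G) (B' : Set G) : Prop :=
  IsOpen B' ∧ B'.Nonempty ∧
    (if m.1 = s.z then B' ⊆ s.B else B' ⊆ s.A) ∧
    orbCl B' (pt x y (!m.1)) = orbCl m.2.1 (pt x y m.1)

/-- The state after a round. -/
def sStep (s : SState G) (m : SMove G) (B' : Set G) : SState G :=
  ⟨m.1, m.2.1, B', m.2.2⟩

/-- The state reached after player I has played the (newest-first) history `h`
and player II has followed the strategy `σ`. -/
def sStateAfter (U V : Set G) (α : Ordinal) (σ : List (SMove G) → Set G) :
    List (SMove G) → SState G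
  | [] => ⟨true, U, V, α⟩
  | m :: h => sStep (sStateAfter U V α σ h) m (σ (m :: h))

/-- All of player I's moves in the (newest-first) history were legal. -/
def sLegalHist (U V : Set G) (α : Ordinal) (σ : List (SMove G) → Set G) :
    List (SMove G) → Prop
  | [] => True
  | m :: h => sLegalHist U V α σ h ∧ slegalI (sStateAfter U V α σ h) m

/-- `σ` is a winning strategy for player II in `𝒢ˢ(x,U,y,V,α)`: against any legal
play of player I, every response of `σ` is legal (the game terminates with player I
unable to move, since the ordinals strictly decrease). -/
def sWinning (x y : X) (U V : Set G) (α : Ordinal)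
    (σ : List (SMove G) → Set G) : Prop :=
  ∀ (m : SMove G) (h : List (SMove G)), sLegalHist U V α σ (m :: h) →
    slegalII x y (sStateAfter U V α σ h) m (σ (m :: h))


/-!
Player II keeps the invariant that the current position `⟨z, A, B, γ⟩` satisfies
`(pt z, A) ∼_γ (pt !z, B)`. A legal move `(z', A', β)` has `β < γ`, so the forth clause of
`∼_{β+1}` (applied to the position or to its mirror image, according to the side `z'`) yields an
answer `B'` with `(pt z', A') ∼_β (pt !z', B')`; this is the next invariant, and `∼_β` implies
the `∼₀` condition that makes the answer legal.

Conversely, if II wins from a `∼₀` position, induction on `β` gives `∼_β` for every `β` up to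
the position's ordinal: the answers to the moves `(z, U', β)` and `(!z, V', β)` witness the two
clauses of `∼_{β+1}`, and the remainder of the strategy wins from the resulting position.
Stating both directions for games started at an arbitrary position, with `pt` recording the
side, makes the two clauses the same argument, so no symmetry of the game is needed.
-/

theorem hsim_zero (x : X) (U : Set G) (y : X) (V : Set G) :
    hsim 0 x U y V ↔ orbCl U x = orbCl V y := by
  rw [hsim, Ordinal.limitRecOn_zero]

theorem hsim_succ (β : Ordinal) (x : X) (U : Set G) (y : X) (V : Set G) :
    hsim (Order.succ β) x U y V ↔
      (hsim β x U y V ∧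
      (∀ U' : Set G, IsOpen U' → U'.Nonempty → U' ⊆ U →
        ∃ V' : Set G, IsOpen V' ∧ V'.Nonempty ∧ V' ⊆ V ∧ hsim β y V' x U') ∧
      (∀ V' : Set G, IsOpen V' → V'.Nonempty → V' ⊆ V →
        ∃ U' : Set G, IsOpen U' ∧ U'.Nonempty ∧ U' ⊆ U ∧ hsim β x U' y V')) := by
  rw [hsim, Order.succ_eq_add_one, Ordinal.limitRecOn_add_one]; rfl

theorem hsim_of_isSuccLimit {α : Ordinal} (hα : Order.IsSuccLimit α) (x : X) (U : Set G)
    (y : X) (V : Set G) : hsim α x U y V ↔ ∀ β < α, hsim β x U y V := by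
  rw [hsim, Ordinal.limitRecOn_limit _ _ _ _ hα]; rfl

theorem hsim.symm {α : Ordinal} {x y : X} {U V : Set G} (h : hsim α x U y V) :
    hsim α y V x U := by
  induction α using WellFoundedLT.induction generalizing x y U V with | _ α ih =>
  rcases Ordinal.zero_or_succ_or_isSuccLimit α with rfl | ⟨β, rfl⟩ | hα
  · exact (hsim_zero _ _ _ _).2 ((hsim_zero _ _ _ _).1 h).symm
  · obtain ⟨hβ, forth, back⟩ := (hsim_succ _ _ _ _ _).1 h
    exact (hsim_succ _ _ _ _ _).2 ⟨ih β (Order.lt_succ β) hβ, back, forth⟩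
  · exact (hsim_of_isSuccLimit hα _ _ _ _).2
      fun β hβ => ih β hβ ((hsim_of_isSuccLimit hα _ _ _ _).1 h β hβ)

theorem hsim.of_le {α β : Ordinal} {x y : X} {U V : Set G} (h : hsim α x U y V)
    (hβα : β ≤ α) : hsim β x U y V := by
  induction α using WellFoundedLT.induction with | _ α ih =>
  rcases hβα.eq_or_lt with rfl | hβα
  · exact h
  rcases Ordinal.zero_or_succ_or_isSuccLimit α with rfl | ⟨γ, rfl⟩ | hα
  · simp at hβα
  · exact ih γ (Order.lt_succ γ) ((hsim_succ _ _ _ _ _).1 h).1 (Order.lt_succ_iff.1 hβα)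
  · exact (hsim_of_isSuccLimit hα _ _ _ _).1 h β hβα

theorem hsim.orbCl_eq {α : Ordinal} {x y : X} {U V : Set G} (h : hsim α x U y V) :
    orbCl U x = orbCl V y :=
  (hsim_zero _ _ _ _).1 (h.of_le zero_le)

theorem hsim.forth {α β : Ordinal} {x y : X} {U V U' : Set G} (h : hsim α x U y V)
    (hβα : β < α) (hU' : IsOpen U') (hU'ne : U'.Nonempty) (hU'U : U' ⊆ U) :
    ∃ V' : Set G, IsOpen V' ∧ V'.Nonempty ∧ V' ⊆ V ∧ hsim β x U' y V' := by
  obtain ⟨-, forth, -⟩ := (hsim_succ _ _ _ _ _).1 (h.of_le (Order.succ_le_of_lt hβα))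
  obtain ⟨V', hV', hV'ne, hV'V, hsim'⟩ := forth U' hU' hU'ne hU'U
  exact ⟨V', hV', hV'ne, hV'V, hsim'.symm⟩

def StateSim (x y : X) (β : Ordinal) (s : SState G) : Prop :=
  hsim β (pt x y s.z) s.A (pt x y (!s.z)) s.B

def sStateFrom (s₀ : SState G) (σ : List (SMove G) → Set G) : List (SMove G) → SState G
  | [] => s₀
  | m :: h => sStep (sStateFrom s₀ σ h) m (σ (m :: h))

def sLegalFrom (s₀ : SState G) (σ : List (SMove G) → Set G) : List (SMove G) → Prop
  | [] => True
  | m :: h => sLegalFrom s₀ σ h ∧ slegalI (sStateFrom s₀ σ h) m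

def sWinningFrom (x y : X) (s₀ : SState G) (σ : List (SMove G) → Set G) : Prop :=
  ∀ (m : SMove G) (h : List (SMove G)), sLegalFrom s₀ σ (m :: h) →
    slegalII x y (sStateFrom s₀ σ h) m (σ (m :: h))

theorem sWinning_iff_sWinningFrom {x y : X} {U V : Set G} {α : Ordinal}
    {σ : List (SMove G) → Set G} :
    sWinning x y U V α σ ↔ sWinningFrom x y ⟨true, U, V, α⟩ σ := by
  have hstate : ∀ h, sStateAfter U V α σ h = sStateFrom ⟨true, U, V, α⟩ σ h := by
    intro h
    induction h with
    | nil => rfl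
    | cons m h ih => simp only [sStateAfter, sStateFrom, ih]
  have hlegal : ∀ h, sLegalHist U V α σ h ↔ sLegalFrom ⟨true, U, V, α⟩ σ h := by
    intro h
    induction h with
    | nil => rfl
    | cons m h ih => simp only [sLegalHist, sLegalFrom, ih, hstate]
  simp only [sWinning, sWinningFrom, hlegal, hstate]

/-- Answers every move by `r` applied to the current position, which `List.foldr` replays from
the newest-first history. -/
def positionalStrategy (r : SState G → SMove G → Set G) (s₀ : SState G) :
    List (SMove G) → Set G
  | [] => ∅
  | m :: h => r (h.foldr (fun m s => sStep s m (r s m)) s₀) m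

theorem sStateFrom_positionalStrategy (r : SState G → SMove G → Set G) (s₀ : SState G)
    (h : List (SMove G)) :
    sStateFrom s₀ (positionalStrategy r s₀) h = h.foldr (fun m s => sStep s m (r s m)) s₀ := by
  induction h with
  | nil => rfl
  | cons m h ih => simp only [sStateFrom, positionalStrategy, ih, List.foldr_cons]

theorem sWinningFrom_positionalStrategy {x y : X} {s₀ : SState G}
    {r : SState G → SMove G → Set G} (P : SState G → Prop) (h₀ : P s₀)
    (hr : ∀ s m, P s → slegalI s m → slegalII x y s m (r s m) ∧ P (sStep s m (r s m))) :
    sWinningFrom x y s₀ (positionalStrategy r s₀) := by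
  have hP : ∀ h, sLegalFrom s₀ (positionalStrategy r s₀) h →
      P (h.foldr (fun m s => sStep s m (r s m)) s₀) := by
    intro h
    induction h with
    | nil => exact fun _ => h₀
    | cons m h ih =>
      rintro ⟨hh, hm⟩
      rw [sStateFrom_positionalStrategy] at hm
      exact (hr _ m (ih hh) hm).2
  rintro m h ⟨hh, hm⟩
  rw [sStateFrom_positionalStrategy] at hm ⊢
  exact (hr _ m (hP h hh) hm).1

theorem exists_response {x y : X} {s : SState G} {m : SMove G} (hs : StateSim x y s.o s)
    (hm : slegalI s m) : ∃ B', slegalII x y s m B' ∧ StateSim x y m.2.2 (sStep s m B') := by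
  obtain ⟨z, A, B, o⟩ := s
  obtain ⟨b, A', β⟩ := m
  obtain ⟨hβ, hA', hA'ne, hA'sub⟩ := hm
  suffices ∃ B', IsOpen B' ∧ B'.Nonempty ∧ (if b = z then B' ⊆ B else B' ⊆ A) ∧
      hsim β (pt x y b) A' (pt x y (!b)) B' by
    obtain ⟨B', hB', hB'ne, hB'sub, hsim'⟩ := this
    exact ⟨B', ⟨hB', hB'ne, hB'sub, hsim'.orbCl_eq.symm⟩, hsim'⟩
  dsimp only at hβ hA'sub ⊢
  by_cases hbz : b = z
  · subst hbz
    simp only [if_true] at hA'sub ⊢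
    exact hs.forth hβ hA' hA'ne hA'sub
  · obtain rfl : b = !z := Bool.eq_not_iff.2 hbz
    simp only [hbz, if_false, Bool.not_not] at hA'sub ⊢
    exact hs.symm.forth hβ hA' hA'ne hA'sub

theorem exists_sWinningFrom {x y : X} {s₀ : SState G} (h : StateSim x y s₀.o s₀) :
    ∃ σ, sWinningFrom x y s₀ σ := by
  choose! r hr using fun (s : SState G) (m : SMove G) (hs : StateSim x y s.o s)
    (hm : slegalI s m) => exists_response hs hm
  exact ⟨_, sWinningFrom_positionalStrategy (fun s => StateSim x y s.o s) h hr⟩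

theorem sWinningFrom.residual {x y : X} {s : SState G} {σ : List (SMove G) → Set G}
    {m : SMove G} (hσ : sWinningFrom x y s σ) (hm : slegalI s m) :
    sWinningFrom x y (sStep s m (σ [m])) (fun h => σ (h ++ [m])) := by
  have hstate : ∀ h, sStateFrom (sStep s m (σ [m])) (fun h => σ (h ++ [m])) h =
      sStateFrom s σ (h ++ [m]) := by
    intro h
    induction h with
    | nil => rfl
    | cons m' h ih => simp only [sStateFrom, ih, List.cons_append]
  have hlegal : ∀ h, sLegalFrom (sStep s m (σ [m])) (fun h => σ (h ++ [m])) h →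
      sLegalFrom s σ (h ++ [m]) := by
    intro h
    induction h with
    | nil => exact fun _ => ⟨trivial, hm⟩
    | cons m' h ih =>
      rintro ⟨hh, hm'⟩
      exact ⟨ih hh, hstate h ▸ hm'⟩
  intro m' h hleg
  rw [hstate]
  exact hσ m' (h ++ [m]) (hlegal (m' :: h) hleg)

theorem StateSim.of_sWinningFrom {x y : X} {β : Ordinal} {s : SState G}
    {σ : List (SMove G) → Set G} (hσ : sWinningFrom x y s σ)
    (h₀ : orbCl s.A (pt x y s.z) = orbCl s.B (pt x y (!s.z)))
    (hβ : β ≤ s.o) : StateSim x y β s := by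
  induction β using WellFoundedLT.induction generalizing s σ with | _ β ih =>
  rcases Ordinal.zero_or_succ_or_isSuccLimit β with rfl | ⟨γ, rfl⟩ | hβlim
  · exact (hsim_zero _ _ _ _).2 h₀
  · have hγ : γ < s.o := Order.succ_le_iff.1 hβ
    have answer : ∀ b A', slegalI s (b, A', γ) →
        slegalII x y s (b, A', γ) (σ [(b, A', γ)]) ∧
          StateSim x y γ (sStep s (b, A', γ) (σ [(b, A', γ)])) := by
      intro b A' hm
      have hII : slegalII x y s _ _ := hσ _ [] ⟨trivial, hm⟩
      exact ⟨hII, ih γ (Order.lt_succ γ) (hσ.residual hm) hII.2.2.2.symm le_rfl⟩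
    obtain ⟨z, A, B, o⟩ := s
    refine (hsim_succ _ _ _ _ _).2 ⟨ih γ (Order.lt_succ γ) hσ h₀ hγ.le, ?_, ?_⟩
    · intro U' hU' hU'ne hU'A
      obtain ⟨⟨hB', hB'ne, hB'B, -⟩, hsim'⟩ := answer z U' ⟨hγ, hU', hU'ne, by simpa⟩
      exact ⟨_, hB', hB'ne, by simpa using hB'B, hsim'.symm⟩
    · intro V' hV' hV'ne hV'B
      obtain ⟨⟨hB', hB'ne, hB'A, -⟩, hsim'⟩ := answer (!z) V' ⟨hγ, hV', hV'ne, by simpa⟩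
      refine ⟨_, hB', hB'ne, by simpa using hB'A, ?_⟩
      simpa [StateSim, sStep] using hsim'.symm
  · exact (hsim_of_isSuccLimit hβlim _ _ _ _).2 fun γ hγ => ih γ hγ hσ h₀ (hγ.le.trans hβ)

theorem hsim_iff_sWinning_general (x y : X) (U V : Set G)
    (h0 : orbCl U x = orbCl V y) (α : Ordinal) :
    hsim α x U y V ↔ ∃ σ : List (SMove G) → Set G, sWinning x y U V α σ := by
  simp only [sWinning_iff_sWinningFrom]
  exact ⟨fun h => exists_sWinningFrom h, fun ⟨σ, hσ⟩ => StateSim.of_sWinningFrom hσ h0 le_rfl⟩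

/-- Suppose `(x,U) ∼₀ (y,V)`. Then for every ordinal `α > 0`, `(x,U) ∼_α (y,V)`
iff player II has a winning strategy in `𝒢ˢ(x,U,y,V,α)`. -/
theorem hsim_iff_sWinning (x y : X) (U V : Set G)
    (hU : IsOpen U) (hUne : U.Nonempty) (hV : IsOpen V) (hVne : V.Nonempty)
    (h0 : orbCl U x = orbCl V y) (α : Ordinal) (hα : 0 < α) :
    hsim α x U y V ↔ ∃ σ : List (SMove G) → Set G, sWinning x y U V α σ :=
  hsim_iff_sWinning_general x y U V h0 α

end
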